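/- Let D be a domain in ℝ^N, N ≥ 2, and let u : D → [-∞, +∞) be such that there exist x₁, x₂ ∈ D with u(x₁) > 0 > u(x₂). Then u is harmonic if and only if both u and -u are quasinearly subharmonic n.s. (possibly with different constants K₁, K₂). -/

import Mathlib

open MeasureTheory Metric
open scoped ENNReal

noncomputable section

/-- `ℝ^N` as Euclidean space. -/
abbrev Euc (N : ℕ) := EuclideanSpace ℝ (Fin N)

/-- `ν_N`: the volume of the unit ball in `ℝ^N`. -/
noncomputable def unitBallVol (N : ℕ) : ℝ := (volume (ball (0 : Euc N) 1)).toReal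

/-- Positive part of an extended real, valued in `ℝ≥0∞`. -/
noncomputable def epos (x : EReal) : ℝ≥0∞ := if x = ⊤ then ⊤ else ENNReal.ofReal x.toReal

/-- The extended-real valued Lebesgue integral of `u` over `s`
(well defined whenever the positive part is integrable). -/
noncomputable def esetInt {N : ℕ} (u : Euc N → EReal) (s : Set (Euc N)) : EReal :=
  ((∫⁻ y in s, epos (u y)) : ℝ≥0∞) - ((∫⁻ y in s, epos (-(u y))) : ℝ≥0∞)

/-- The generalized sub-mean-value inequality
`u(x) ≤ K/(ν_N r^N) ∫_{B(x,r)} u dm_N` over all closed balls contained in `D`. -/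
def SubMeanIneq {N : ℕ} (K : ℝ) (D : Set (Euc N)) (u : Euc N → EReal) : Prop :=
  ∀ x r, 0 < r → closedBall x r ⊆ D →
    u x ≤ ((K / (unitBallVol N * r ^ N) : ℝ) : EReal) * esetInt u (ball x r)

/-- `u` is `K`-quasinearly subharmonic n.s. (in the narrow sense) on `D`:
`u` is measurable, `u⁺ ∈ L¹_loc(D)`, `u < +∞` and the sub-mean-value
inequality with constant `K` holds on all closed balls in `D`. -/
def QNSns {N : ℕ} (K : ℝ) (D : Set (Euc N)) (u : Euc N → EReal) : Prop :=
  1 ≤ K ∧ AEMeasurable u (volume.restrict D) ∧ (∀ x ∈ D, u x < ⊤) ∧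
  LocallyIntegrableOn (fun y => ((u y) ⊔ 0).toReal) D volume ∧
  SubMeanIneq K D u

/-- The family of inequalities (for every `M ≥ 0`, applied to `u_M = max (u, -M) + M`)
defining `K`-quasinearly subharmonic functions. -/
def QNSIneqFull {N : ℕ} (K : ℝ) (D : Set (Euc N)) (u : Euc N → EReal) : Prop :=
  ∀ M : ℝ, 0 ≤ M → ∀ x r, 0 < r → closedBall x r ⊆ D →
    (u x ⊔ ((-M : ℝ) : EReal)) + (M : EReal) ≤
      ((K / (unitBallVol N * r ^ N) : ℝ) : EReal) *
        ((∫⁻ y in ball x r, epos ((u y ⊔ ((-M : ℝ) : EReal)) + (M : EReal))) : ℝ≥0∞)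

/-- `u` is `K`-quasinearly subharmonic on `D`. -/
def QNSfull {N : ℕ} (K : ℝ) (D : Set (Euc N)) (u : Euc N → EReal) : Prop :=
  1 ≤ K ∧ AEMeasurable u (volume.restrict D) ∧ (∀ x ∈ D, u x < ⊤) ∧
  LocallyIntegrableOn (fun y => ((u y) ⊔ 0).toReal) D volume ∧
  QNSIneqFull K D u

/-- `u ∈ L¹_loc(D)` for an extended-real valued `u`. -/
def LocIntE {N : ℕ} (u : Euc N → EReal) (D : Set (Euc N)) : Prop :=
  ∀ k, k ⊆ D → IsCompact k → (∫⁻ y in k, epos (u y) + epos (-(u y))) < ⊤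

/-- The sub-mean-value inequality for real-valued functions. -/
def SubMeanIneqR {N : ℕ} (K : ℝ) (D : Set (Euc N)) (u : Euc N → ℝ) : Prop :=
  ∀ x r, 0 < r → closedBall x r ⊆ D →
    u x ≤ (K / (unitBallVol N * r ^ N)) * ∫ y in ball x r, u y

/-- The quasinearly subharmonicity inequalities (for every `M ≥ 0`,
applied to `u_M = max (u, -M) + M`) for real-valued functions. -/
def QNSIneqFullR {N : ℕ} (K : ℝ) (D : Set (Euc N)) (u : Euc N → ℝ) : Prop :=
  ∀ M : ℝ, 0 ≤ M → ∀ x r, 0 < r → closedBall x r ⊆ D →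
    max (u x) (-M) + M ≤
      (K / (unitBallVol N * r ^ N)) * ∫ y in ball x r, (max (u y) (-M) + M)

/-- `u : D → [-∞, +∞)` is harmonic on `D`: it is finite (real-valued) on `D`,
continuous on `D`, and satisfies the mean value equality on all closed balls in `D`. -/
def IsHarmonicOn {N : ℕ} (D : Set (Euc N)) (u : Euc N → EReal) : Prop :=
  (∀ x ∈ D, u x ≠ ⊥ ∧ u x ≠ ⊤) ∧ ContinuousOn (fun x => (u x).toReal) D ∧
  ∀ x r, 0 < r → closedBall x r ⊆ D →
    (u x).toReal = (1 / (unitBallVol N * r ^ N)) * ∫ y in ball x r, (u y).toReal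

end

/-!
If `u` and `-u` are quasinearly subharmonic n.s. with constants `K₁` and `K₂`, then `u` is
finite and locally integrable on `D`, and `K₂ ∫_B u ≤ ν_N r^N u(x) ≤ K₁ ∫_B u` for every ball
`B = B(x, r)` with `B̄ ⊆ D`. On a small ball around `x₁` the integral is positive and around `x₂`
it is negative, which forces `K₁ = K₂ =: K`, so `u(x) = K ⨍_{B(x,r)} u`. Integrals over balls of
a fixed radius depend continuously on the centre, hence `u` is continuous, and letting `r → 0` at
`x₁` gives `u(x₁) = K u(x₁)`, i.e. `K = 1`. Conversely a harmonic function and its negative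
satisfy the inequality with `K = 1`.
-/

lemma EReal.toReal_sup_zero (a : EReal) : (a ⊔ 0).toReal = max a.toReal 0 := by
  induction a using EReal.rec with
  | bot => simp
  | top => simp
  | coe b => rw [← EReal.coe_zero, ← EReal.coe_strictMono.monotone.map_max]; rfl

lemma EReal.toReal_eq_toReal_sup_zero_sub (a : EReal) :
    a.toReal = (a ⊔ 0).toReal - (-a ⊔ 0).toReal := by
  rw [EReal.toReal_sup_zero, EReal.toReal_sup_zero, EReal.toReal_neg_eq,
    max_zero_sub_max_neg_zero_eq_self]

lemma epos_of_ne_top {a : EReal} (ha : a ≠ ⊤) : epos a = ENNReal.ofReal a.toReal := by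
  simp [epos, ha]

lemma esetInt_eq_integral {N : ℕ} {u : Euc N → EReal} {s : Set (Euc N)} (hs : MeasurableSet s)
    (hfin : ∀ y ∈ s, u y ≠ ⊤ ∧ u y ≠ ⊥) (hint : IntegrableOn (fun y => (u y).toReal) s) :
    esetInt u s = ((∫ y in s, (u y).toReal : ℝ) : EReal) := by
  have hpos : ∫⁻ y in s, epos (u y) = ∫⁻ y in s, ENNReal.ofReal (u y).toReal :=
    setLIntegral_congr_fun hs fun y hy => epos_of_ne_top (hfin y hy).1
  have hneg : ∫⁻ y in s, epos (-(u y)) = ∫⁻ y in s, ENNReal.ofReal (-(u y).toReal) :=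
    setLIntegral_congr_fun hs fun y hy => by
      rw [epos_of_ne_top (by simpa [EReal.neg_eq_top_iff] using (hfin y hy).2), EReal.toReal_neg_eq]
  have hneg_fin : ∫⁻ y in s, ENNReal.ofReal (-(u y).toReal) ≠ ⊤ :=
    hint.neg.lintegral_lt_top.ne
  rw [esetInt, hpos, hneg, integral_eq_lintegral_pos_part_sub_lintegral_neg_part hint,
    EReal.coe_sub, ← EReal.coe_ennreal_toReal hint.lintegral_lt_top.ne,
    ← EReal.coe_ennreal_toReal hneg_fin]

section BallIntegral

open Filter Topology

variable {E : Type*} [NormedAddCommGroup E] [NormedSpace ℝ E] [MeasurableSpace E] [BorelSpace E]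
  [FiniteDimensional ℝ E] {μ : Measure E} [μ.IsAddHaarMeasure]

lemma continuousAt_integral_ball {g : E → ℝ} {x₀ : E} {r R : ℝ} (hr : 0 < r) (hrR : r < R)
    (hg : IntegrableOn g (ball x₀ R) μ) :
    ContinuousAt (fun x => ∫ y in ball x r, g y ∂μ) x₀ := by
  have hsub : ∀ᶠ x in 𝓝 x₀, ball x r ⊆ ball x₀ R := by
    filter_upwards [ball_mem_nhds x₀ (sub_pos.2 hrR)] with x hx
    exact ball_subset_ball' (by linarith [mem_ball.1 hx])
  have hindicator : (fun x => ∫ y in ball x₀ R, (ball x r).indicator g y ∂μ)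
      =ᶠ[𝓝 x₀] fun x => ∫ y in ball x r, g y ∂μ := by
    filter_upwards [hsub] with x hx
    rw [setIntegral_indicator measurableSet_ball, Set.inter_eq_self_of_subset_right hx]
  refine (continuousAt_of_dominated (bound := fun y => ‖g y‖)
    (Eventually.of_forall fun x => hg.1.indicator measurableSet_ball)
    (Eventually.of_forall fun x => ae_of_all _ fun y => norm_indicator_le_norm_self g y)
    hg.norm ?_).congr hindicator
  -- off the null sphere `sphere x₀ r`, membership of `y` in `ball x r` is locally constant in `x`
  have hsphere : ∀ᵐ y ∂μ, y ∉ sphere x₀ r :=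
    measure_eq_zero_iff_ae_notMem.1 (Measure.addHaar_sphere_of_ne_zero μ x₀ hr.ne')
  filter_upwards [ae_restrict_of_ae hsphere] with y hy
  have hfrontier : x₀ ∉ frontier (ball y r) := by
    rwa [frontier_ball y hr.ne', mem_sphere_comm]
  have hswap : (fun x => (ball x r).indicator g y) = (ball y r).indicator fun _ => g y := by
    ext x
    by_cases hx : x ∈ ball y r
    · simp [hx, mem_ball_comm.1 hx]
    · simp [hx, mt mem_ball_comm.1 hx]
  exact hswap ▸ continuousOn_const.continuousAt_indicator hfrontier

end BallIntegral

section MeanValue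

open Asymptotics Filter Topology

variable {N : ℕ}

lemma unitBallVol_pos : 0 < unitBallVol N :=
  ENNReal.toReal_pos (measure_ball_pos _ _ one_pos).ne' measure_ball_lt_top.ne

lemma volume_real_ball (x : Euc N) {r : ℝ} (hr : 0 < r) :
    volume.real (ball x r) = unitBallVol N * r ^ N := by
  rw [measureReal_def, Measure.addHaar_ball_of_pos _ _ hr, finrank_euclideanSpace_fin,
    ENNReal.toReal_mul, ENNReal.toReal_ofReal (by positivity), unitBallVol, mul_comm]

def MeanValueEqR (K : ℝ) (D : Set (Euc N)) (g : Euc N → ℝ) : Prop :=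
  ∀ x r, 0 < r → closedBall x r ⊆ D →
    g x = K / (unitBallVol N * r ^ N) * ∫ y in ball x r, g y

lemma SubMeanIneqR.le_of_pos {K₁ K₂ : ℝ} {D : Set (Euc N)} {g : Euc N → ℝ} {x : Euc N}
    (h₁ : SubMeanIneqR K₁ D g) (h₂ : SubMeanIneqR K₂ D (-g)) (hK₁ : 0 < K₁)
    (hD : IsOpen D) (hx : x ∈ D) (hgx : 0 < g x) : K₂ ≤ K₁ := by
  obtain ⟨ε, hε, hball⟩ := Metric.isOpen_iff.1 hD x hx
  have hr : 0 < ε / 2 := half_pos hε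
  have hsub : closedBall x (ε / 2) ⊆ D := (closedBall_subset_ball (half_lt_self hε)).trans hball
  set c := unitBallVol N * (ε / 2) ^ N
  have hc : 0 < c := mul_pos unitBallVol_pos (pow_pos hr N)
  set I := ∫ y in ball x (ε / 2), g y
  have hup : g x ≤ K₁ / c * I := h₁ x _ hr hsub
  have hlow : K₂ / c * I ≤ g x := by
    have := h₂ x _ hr hsub
    simp only [Pi.neg_apply, integral_neg] at this
    linarith
  have hI : 0 < I := pos_of_mul_pos_right (hgx.trans_le hup) (div_pos hK₁ hc).le
  exact (div_le_div_iff_of_pos_right hc).1 (le_of_mul_le_mul_right (hlow.trans hup) hI)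

lemma SubMeanIneqR.meanValueEqR {K : ℝ} {D : Set (Euc N)} {g : Euc N → ℝ}
    (h₁ : SubMeanIneqR K D g) (h₂ : SubMeanIneqR K D (-g)) : MeanValueEqR K D g := by
  intro x r hr hsub
  have := h₂ x r hr hsub
  simp only [Pi.neg_apply, integral_neg] at this
  linarith [h₁ x r hr hsub]

lemma MeanValueEqR.continuousOn {K : ℝ} {D : Set (Euc N)} {g : Euc N → ℝ}
    (h : MeanValueEqR K D g) (hD : IsOpen D) (hg : LocallyIntegrableOn g D) :
    ContinuousOn g D := by
  intro x₀ hx₀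
  obtain ⟨ε, hε, hball⟩ := Metric.isOpen_iff.1 hD x₀ hx₀
  have hr : 0 < ε / 3 := by positivity
  have hint : IntegrableOn g (ball x₀ (2 * ε / 3)) :=
    (hg.integrableOn_compact_subset
      ((closedBall_subset_ball (by linarith)).trans hball) (isCompact_closedBall x₀ _)).mono_set
      ball_subset_closedBall
  have hmean : (fun x => K / (unitBallVol N * (ε / 3) ^ N) * ∫ y in ball x (ε / 3), g y)
      =ᶠ[𝓝 x₀] g := by
    filter_upwards [ball_mem_nhds x₀ hr] with x hx
    refine (h x _ hr ((closedBall_subset_ball' ?_).trans hball)).symm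
    linarith [mem_ball.1 hx]
  refine (((continuousAt_integral_ball hr (by linarith) hint).const_mul _).congr
    hmean).continuousWithinAt

lemma MeanValueEqR.eq_one {K : ℝ} {D : Set (Euc N)} {g : Euc N → ℝ} {x : Euc N}
    (h : MeanValueEqR K D g) (hD : IsOpen D) (hg : ContinuousOn g D) (hx : x ∈ D)
    (hgx : g x ≠ 0) : K = 1 := by
  obtain ⟨ε, hε, hball⟩ := Metric.isOpen_iff.1 hD x hx
  set m : ℝ → ℝ := fun r => unitBallVol N * r ^ N
  have hm : ∀ᶠ r in 𝓝[>] (0 : ℝ), 0 < r ∧ r < ε := Ioo_mem_nhdsGT hε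
  have hballs : Tendsto (fun r => ball x r) (𝓝[>] 0) (𝓝 x).smallSets :=
    ((tendsto_closedBall_smallSets x).mono_left nhdsWithin_le_nhds).smallSets_mono
      (Eventually.of_forall fun r => ball_subset_closedBall)
  have hvol : (fun r => volume.real (ball x r)) =ᶠ[𝓝[>] 0] m :=
    hm.mono fun r hr => volume_real_ball x hr.1
  have ho := (hg.continuousAt (hD.mem_nhds hx)).integral_sub_linear_isLittleO_ae
    (hg.stronglyMeasurableAtFilter hD x hx) hballs m hvol
  have hlin : (fun r => K * ((∫ y in ball x r, g y) - m r • g x))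
      =ᶠ[𝓝[>] 0] fun r => (1 - K) * g x * m r := by
    filter_upwards [hm] with r hr
    have hmr : 0 < m r := mul_pos unitBallVol_pos (pow_pos hr.1 N)
    have := h x r hr.1 ((closedBall_subset_ball hr.2).trans hball)
    rw [div_mul_eq_mul_div, eq_div_iff hmr.ne'] at this
    rw [smul_eq_mul]
    linarith
  by_contra hK
  have hc : (1 - K) * g x ≠ 0 := mul_ne_zero (sub_ne_zero.2 (Ne.symm hK)) hgx
  have hmm : m =o[𝓝[>] 0] m :=
    (isLittleO_const_mul_left_iff hc).1 ((ho.const_mul_left K).congr' hlin EventuallyEq.rfl)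
  exact isLittleO_irrefl
    (hm.mono fun r hr => (mul_pos unitBallVol_pos (pow_pos hr.1 N)).ne').frequently hmm

end MeanValue

section Quasinearly

variable {N : ℕ} {D : Set (Euc N)} {u : Euc N → EReal}

lemma IsHarmonicOn.neg (h : IsHarmonicOn D u) : IsHarmonicOn D (fun x => -(u x)) := by
  obtain ⟨hfin, hcont, hmean⟩ := h
  refine ⟨fun x hx => ⟨EReal.neg_eq_bot_iff.not.2 (hfin x hx).2,
    EReal.neg_eq_top_iff.not.2 (hfin x hx).1⟩, ?_, fun x r hr hsub => ?_⟩
  · simp only [EReal.toReal_neg_eq]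
    exact hcont.neg
  · simp only [EReal.toReal_neg_eq, integral_neg, hmean x r hr hsub, mul_neg]

lemma IsHarmonicOn.qnsns_one (h : IsHarmonicOn D u) (hD : IsOpen D) : QNSns 1 D u := by
  obtain ⟨hfin, hcont, hmean⟩ := h
  have hcoe : ∀ x ∈ D, ((u x).toReal : EReal) = u x := fun x hx =>
    EReal.coe_toReal (hfin x hx).2 (hfin x hx).1
  refine ⟨le_rfl, ?_, fun x hx => (hfin x hx).2.lt_top, ?_, fun x r hr hsub => ?_⟩
  · exact (hcont.aemeasurable hD.measurableSet).coe_real_ereal.congr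
      (ae_restrict_of_forall_mem hD.measurableSet hcoe)
  · simp only [EReal.toReal_sup_zero]
    exact (hcont.sup continuousOn_const).locallyIntegrableOn hD.measurableSet
  · have hball : ball x r ⊆ D := ball_subset_closedBall.trans hsub
    have hint : IntegrableOn (fun y => (u y).toReal) (ball x r) :=
      ((hcont.mono hsub).integrableOn_compact (isCompact_closedBall x r)).mono_set
        ball_subset_closedBall
    rw [esetInt_eq_integral measurableSet_ball
      (fun y hy => ⟨(hfin y (hball hy)).2, (hfin y (hball hy)).1⟩) hint,
      ← hcoe x (hsub (mem_closedBall_self hr.le)), ← EReal.coe_mul]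
    exact EReal.coe_le_coe_iff.2 (hmean x r hr hsub).le

lemma QNSns.locallyIntegrableOn_toReal {K₁ K₂ : ℝ} (h₁ : QNSns K₁ D u)
    (h₂ : QNSns K₂ D (fun x => -(u x))) : LocallyIntegrableOn (fun y => (u y).toReal) D := by
  have hdecomp : (fun y => (u y).toReal) =
      (fun y => (u y ⊔ 0).toReal) - fun y => (-(u y) ⊔ 0).toReal :=
    funext fun y => EReal.toReal_eq_toReal_sup_zero_sub (u y)
  exact hdecomp ▸ h₁.2.2.2.1.sub h₂.2.2.2.1

lemma QNSns.subMeanIneqR_toReal {K : ℝ} (h : QNSns K D u) (hbot : ∀ x ∈ D, u x ≠ ⊥)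
    (hg : LocallyIntegrableOn (fun y => (u y).toReal) D) :
    SubMeanIneqR K D (fun y => (u y).toReal) := by
  intro x r hr hsub
  have hball : ball x r ⊆ D := ball_subset_closedBall.trans hsub
  have hint : IntegrableOn (fun y => (u y).toReal) (ball x r) :=
    (hg.integrableOn_compact_subset hsub (isCompact_closedBall x r)).mono_set
      ball_subset_closedBall
  have hxD : x ∈ D := hsub (mem_closedBall_self hr.le)
  have hx := h.2.2.2.2 x r hr hsub
  rw [esetInt_eq_integral measurableSet_ball
    (fun y hy => ⟨(h.2.2.1 y (hball hy)).ne, hbot y (hball hy)⟩) hint,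
    ← EReal.coe_toReal (h.2.2.1 x hxD).ne (hbot x hxD), ← EReal.coe_mul] at hx
  exact EReal.coe_le_coe_iff.1 hx

end Quasinearly

theorem harmonic_iff_qnsns_of_signChange_general {N : ℕ}
    (D : Set (Euc N)) (hDopen : IsOpen D)
    (u : Euc N → EReal)
    (x₁ x₂ : Euc N) (hx₁ : x₁ ∈ D) (hx₂ : x₂ ∈ D)
    (hpos : 0 < u x₁) (hneg : u x₂ < 0) :
    IsHarmonicOn D u ↔
      (∃ K₁ : ℝ, QNSns K₁ D u) ∧ (∃ K₂ : ℝ, QNSns K₂ D (fun x => -(u x))) := by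
  refine ⟨fun h => ⟨⟨1, h.qnsns_one hDopen⟩, ⟨1, h.neg.qnsns_one hDopen⟩⟩, ?_⟩
  rintro ⟨⟨K₁, h₁⟩, ⟨K₂, h₂⟩⟩
  set g : Euc N → ℝ := fun y => (u y).toReal
  have hbot : ∀ x ∈ D, u x ≠ ⊥ := fun x hx => EReal.neg_eq_top_iff.not.1 (h₂.2.2.1 x hx).ne
  have hg : LocallyIntegrableOn g D := h₁.locallyIntegrableOn_toReal h₂
  have hneg_g : (fun y => (-(u y)).toReal) = -g := funext fun _ => EReal.toReal_neg_eq
  have hs₁ : SubMeanIneqR K₁ D g := h₁.subMeanIneqR_toReal hbot hg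
  have hs₂ : SubMeanIneqR K₂ D (-g) := hneg_g ▸ h₂.subMeanIneqR_toReal
    (fun x hx => EReal.neg_eq_bot_iff.not.2 (h₁.2.2.1 x hx).ne) (hneg_g ▸ hg.neg)
  have hgx₁ : 0 < g x₁ := EReal.toReal_pos hpos (h₁.2.2.1 x₁ hx₁).ne
  have hgx₂ : g x₂ < 0 := EReal.toReal_neg hneg (hbot x₂ hx₂)
  have hK : K₂ = K₁ := le_antisymm
    (hs₁.le_of_pos hs₂ (one_pos.trans_le h₁.1) hDopen hx₁ hgx₁)
    (hs₂.le_of_pos ((neg_neg g).symm ▸ hs₁) (one_pos.trans_le h₂.1) hDopen hx₂ (neg_pos.2 hgx₂))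
  have hmean : MeanValueEqR K₁ D g := hs₁.meanValueEqR (hK ▸ hs₂)
  have hcont : ContinuousOn g D := hmean.continuousOn hDopen hg
  obtain rfl : K₁ = 1 := hmean.eq_one hDopen hcont hx₁ hgx₁.ne'
  exact ⟨fun x hx => ⟨hbot x hx, (h₁.2.2.1 x hx).ne⟩, hcont, hmean⟩

/-- if `u` takes a positive and a negative value on `D`, then
`u` is harmonic iff both `u` and `-u` are quasinearly subharmonic n.s.
(possibly with different constants). -/
theorem harmonic_iff_qnsns_of_signChange {N : ℕ} (hN : 2 ≤ N)
    (D : Set (Euc N)) (hDopen : IsOpen D) (hDconn : IsConnected D)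
    (u : Euc N → EReal)
    (x₁ x₂ : Euc N) (hx₁ : x₁ ∈ D) (hx₂ : x₂ ∈ D)
    (hpos : 0 < u x₁) (hneg : u x₂ < 0) :
    IsHarmonicOn D u ↔
      (∃ K₁ : ℝ, QNSns K₁ D u) ∧ (∃ K₂ : ℝ, QNSns K₂ D (fun x => -(u x))) :=
  harmonic_iff_qnsns_of_signChange_general D hDopen u x₁ x₂ hx₁ hx₂ hpos hneg
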